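/- If x = (x₁, x₂) ∈ ℝ^{d₁+d₂} is distributed according to the multivariate Student's t distribution MVT_{d₁+d₂}(ν, (μ₁, μ₂), Σ) with block scale matrix Σ = [[Σ₁₁, Σ₁₂], [Σ₂₁, Σ₂₂]] (Σ positive definite), then the conditional distribution of x₂ given x₁ is MVT_{d₂}(ν + d₁, μ₂', ((ν + c)/(ν + d₁)) Σ₂₂'), where μ₂' = μ₂ + Σ₂₁Σ₁₁⁻¹(x₁ − μ₁), c = (x₁ − μ₁)ᵀΣ₁₁⁻¹(x₁ − μ₁), and Σ₂₂' = Σ₂₂ − Σ₂₁Σ₁₁⁻¹Σ₁₂. -/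

import Mathlib

open MeasureTheory ProbabilityTheory Matrix Filter
open scoped Classical

noncomputable section

/-- Density of the multivariate Student's t distribution `MVT_d(ν, μ, S)`. -/
def mvtPdf (d : ℕ) (ν : ℝ) (μ : Fin d → ℝ) (S : Matrix (Fin d) (Fin d) ℝ) (x : Fin d → ℝ) : ℝ :=
  Real.Gamma ((ν + d) / 2) /
      ((ν * Real.pi) ^ ((d : ℝ) / 2) * Real.Gamma (ν / 2) * Real.sqrt S.det) *
    (1 + (1 / ν) * ((x - μ) ⬝ᵥ S⁻¹ *ᵥ (x - μ))) ^ (-(ν + d) / 2)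

/-- The multivariate Student's t distribution `MVT_d(ν, μ, S)` as a measure on `Fin d → ℝ`. -/
def MVT (d : ℕ) (ν : ℝ) (μ : Fin d → ℝ) (S : Matrix (Fin d) (Fin d) ℝ) :
    Measure (Fin d → ℝ) :=
  volume.withDensity fun x => ENNReal.ofReal (mvtPdf d ν μ S x)

/-!
Reorder the coordinates so that `S` becomes the block matrix `[[S₁₁, S₁₂], [S₁₂ᴴ, S₂₂]]`. Completing
the square through the Schur complement `S₂₂'` splits the quadratic form `(x - μ)ᵀ S⁻¹ (x - μ)`
into `c + q` with `q = (x₂ - μ₂')ᵀ S₂₂'⁻¹ (x₂ - μ₂')`, and `det S = det S₁₁ · det S₂₂'`. In the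
kernel one then has `ν + c + q = (ν + c)(1 + q / (ν + c))`, so the joint density splits into the
`MVT_{d₁}(ν, μ₁, S₁₁)` density of `x₁` and a `t`-density in `x₂` with `ν + d₁` degrees of freedom,
the factor `ν + c` being absorbed into the scale matrix; the Gamma factors telescope.
-/

open scoped ComplexOrder

namespace Matrix

section Blocks

variable {𝕜 m n : Type*} [RCLike 𝕜]

theorem PosDef.toBlocks₁₁ {M : Matrix (m ⊕ n) (m ⊕ n) 𝕜} (hM : M.PosDef) :
    M.toBlocks₁₁.PosDef :=
  hM.submatrix Sum.inl_injective

variable [Fintype m] [Fintype n] [DecidableEq m] [DecidableEq n]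
variable {A : Matrix m m 𝕜} {B : Matrix m n 𝕜} {D : Matrix n n 𝕜}

theorem det_fromBlocks_of_isUnit₁₁ (C : Matrix n m 𝕜) (hA : IsUnit A) :
    (fromBlocks A B C D).det = A.det * (D - C * A⁻¹ * B).det := by
  let := hA.invertible
  rw [det_fromBlocks₁₁, invOf_eq_nonsing_inv]

theorem PosDef.schur_complement (hP : (fromBlocks A B Bᴴ D).PosDef) :
    (D - Bᴴ * A⁻¹ * B).PosDef := by
  have hA : A.PosDef := by simpa using hP.toBlocks₁₁
  let := hA.isUnit.invertible
  refine ((PosDef.fromBlocks₁₁ B D hA).1 hP.posSemidef).posDef_iff_det_ne_zero.2 fun h => ?_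
  have hdet := hP.det_pos
  rw [det_fromBlocks_of_isUnit₁₁ _ hA.isUnit, h, mul_zero] at hdet
  exact hdet.false

theorem star_dotProduct_inv_fromBlocks_mulVec (hA : A.IsHermitian) (hAu : IsUnit A)
    (hSu : IsUnit (D - Bᴴ * A⁻¹ * B)) (v₁ : m → 𝕜) (v₂ : n → 𝕜) :
    star (v₁ ⊕ᵥ v₂) ⬝ᵥ (fromBlocks A B Bᴴ D)⁻¹ *ᵥ (v₁ ⊕ᵥ v₂) =
      star v₁ ⬝ᵥ A⁻¹ *ᵥ v₁ +
        star (v₂ - (Bᴴ * A⁻¹) *ᵥ v₁) ⬝ᵥ (D - Bᴴ * A⁻¹ * B)⁻¹ *ᵥ (v₂ - (Bᴴ * A⁻¹) *ᵥ v₁) := by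
  set S := D - Bᴴ * A⁻¹ * B with hS
  set w := S⁻¹ *ᵥ (v₂ - (Bᴴ * A⁻¹) *ᵥ v₁)
  have hdet : IsUnit (fromBlocks A B Bᴴ D).det := by
    rw [det_fromBlocks_of_isUnit₁₁ _ hAu]
    exact ((isUnit_iff_isUnit_det _).1 hAu).mul ((isUnit_iff_isUnit_det _).1 hSu)
  let := invertibleOfIsUnitDet _ hdet
  have hSw : S *ᵥ w = v₂ - (Bᴴ * A⁻¹) *ᵥ v₁ := by
    simp only [w, mulVec_mulVec, mul_nonsing_inv _ ((isUnit_iff_isUnit_det _).1 hSu), one_mulVec]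
  have hsol : (fromBlocks A B Bᴴ D)⁻¹ *ᵥ (v₁ ⊕ᵥ v₂) = A⁻¹ *ᵥ (v₁ - B *ᵥ w) ⊕ᵥ w := by
    refine inv_mulVec_eq_vec ?_
    rw [fromBlocks_mulVec]
    congr 1
    · simp [mulVec_mulVec, mul_nonsing_inv A ((isUnit_iff_isUnit_det _).1 hAu)]
    · rw [hS, sub_mulVec] at hSw
      simp only [Sum.elim_comp_inl, Sum.elim_comp_inr, mulVec_sub, mulVec_mulVec,
        Matrix.mul_assoc] at hSw ⊢
      rw [← eq_sub_iff_add_eq.1 hSw]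
      abel
  clear_value w
  have hadj : star ((Bᴴ * A⁻¹) *ᵥ v₁) ⬝ᵥ w = star v₁ ⬝ᵥ A⁻¹ *ᵥ B *ᵥ w := by
    rw [star_mulVec, conjTranspose_mul, hA.inv.eq, conjTranspose_conjTranspose,
      ← dotProduct_mulVec, mulVec_mulVec]
  rw [hsol, Function.star_sumElim, sumElim_dotProduct_sumElim, star_sub, sub_dotProduct, hadj,
    mulVec_sub, dotProduct_sub]
  abel

end Blocks

section FinSum

variable {α : Type*} {p q : ℕ}

theorem comp_finSumFinEquiv (v : Fin (p + q) → α) :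
    v ∘ finSumFinEquiv = (fun i => v (Fin.castAdd q i)) ⊕ᵥ (fun j => v (Fin.natAdd p j)) := by
  ext (i | j) <;> simp

theorem submatrix_finSumFinEquiv {r s : ℕ} (M : Matrix (Fin (p + q)) (Fin (r + s)) α) :
    M.submatrix finSumFinEquiv finSumFinEquiv =
      fromBlocks (M.submatrix (Fin.castAdd q) (Fin.castAdd s))
        (M.submatrix (Fin.castAdd q) (Fin.natAdd r))
        (M.submatrix (Fin.natAdd p) (Fin.castAdd s))
        (M.submatrix (Fin.natAdd p) (Fin.natAdd r)) := by
  ext (i | i) (j | j) <;> simp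

end FinSum

theorem comp_equiv_dotProduct_inv_submatrix_mulVec {R m n : Type*} [CommRing R] [Fintype m]
    [Fintype n] [DecidableEq m] [DecidableEq n] (M : Matrix m m R) (e : n ≃ m) (u w : m → R) :
    (u ∘ e) ⬝ᵥ (M.submatrix e e)⁻¹ *ᵥ (w ∘ e) = u ⬝ᵥ M⁻¹ *ᵥ w := by
  rw [inv_submatrix_equiv, submatrix_mulVec_equiv, Function.comp_assoc, e.self_comp_symm,
    Function.comp_id, comp_equiv_dotProduct_comp_equiv]

end Matrix

def mvtNormConst (d : ℕ) (ν δ : ℝ) : ℝ :=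
  Real.Gamma ((ν + d) / 2) / (Real.Gamma (ν / 2) * Real.pi ^ ((d : ℝ) / 2) * Real.sqrt δ)

theorem mvtNormConst_mul {ν δ₁ : ℝ} (d₁ d₂ : ℕ) (δ₂ : ℝ) (hν : 0 < ν) (hδ₁ : 0 ≤ δ₁) :
    mvtNormConst d₁ ν δ₁ * mvtNormConst d₂ (ν + d₁) δ₂ =
      mvtNormConst (d₁ + d₂) ν (δ₁ * δ₂) := by
  have hΓ : Real.Gamma ((ν + d₁) / 2) ≠ 0 := (Real.Gamma_pos_of_pos (by positivity)).ne'
  have hπ : Real.pi ^ (((d₁ : ℝ) + d₂) / 2) =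
      Real.pi ^ ((d₁ : ℝ) / 2) * Real.pi ^ ((d₂ : ℝ) / 2) := by
    rw [← Real.rpow_add Real.pi_pos, add_div]
  simp only [mvtNormConst, Nat.cast_add, hπ, Real.sqrt_mul hδ₁, add_assoc]
  field_simp

theorem mvtPdf_smul_eq {d : ℕ} {ν k : ℝ} {S : Matrix (Fin d) (Fin d) ℝ} (hν : 0 < ν) (hk : 0 < k)
    (hS : S.PosDef) (μ x : Fin d → ℝ) :
    mvtPdf d ν μ (k • S) x = mvtNormConst d ν S.det * (k * ν) ^ (ν / 2) *
      (k * ν + (x - μ) ⬝ᵥ S⁻¹ *ᵥ (x - μ)) ^ (-(ν + d) / 2) := by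
  set Q := (x - μ) ⬝ᵥ S⁻¹ *ᵥ (x - μ)
  have hQ : 0 ≤ Q := by
    simpa only [star_trivial] using hS.inv.posSemidef.dotProduct_mulVec_nonneg (x - μ)
  have hkν : 0 < k * ν := mul_pos hk hν
  let := invertibleOfNonzero hk.ne'
  have hquad : (x - μ) ⬝ᵥ (k • S)⁻¹ *ᵥ (x - μ) = k⁻¹ * Q := by
    rw [Matrix.inv_smul (A := S) k hS.det_pos.ne'.isUnit, invOf_eq_inv, smul_mulVec,
      dotProduct_smul, smul_eq_mul]
  have hsqrt : Real.sqrt (k • S).det = k ^ ((d : ℝ) / 2) * Real.sqrt S.det := by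
    rw [det_smul, Fintype.card_fin, Real.sqrt_mul (by positivity), Real.sqrt_eq_rpow,
      ← Real.rpow_natCast, ← Real.rpow_mul hk.le, mul_one_div]
  have hbase : 1 + 1 / ν * (k⁻¹ * Q) = (k * ν + Q) / (k * ν) := by
    field_simp
  have hpow : ((k * ν) ^ (-(ν + d) / 2))⁻¹ =
      (k * ν) ^ (ν / 2) * k ^ ((d : ℝ) / 2) * ν ^ ((d : ℝ) / 2) := by
    rw [← Real.rpow_neg hkν.le, mul_assoc, ← Real.mul_rpow hk.le hν.le, ← Real.rpow_add hkν]
    ring_nf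
  simp only [mvtPdf, mvtNormConst, hquad, hsqrt, hbase, Real.mul_rpow hν.le Real.pi_pos.le]
  rw [Real.div_rpow (by positivity) hkν.le, div_eq_mul_inv _ ((k * ν) ^ _), hpow]
  have hk_pow := Real.rpow_pos_of_pos hk ((d : ℝ) / 2)
  have hν_pow := Real.rpow_pos_of_pos hν ((d : ℝ) / 2)
  field_simp

theorem mvtPdf_eq {d : ℕ} {ν : ℝ} {S : Matrix (Fin d) (Fin d) ℝ} (hν : 0 < ν) (hS : S.PosDef)
    (μ x : Fin d → ℝ) :
    mvtPdf d ν μ S x = mvtNormConst d ν S.det * ν ^ (ν / 2) *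
      (ν + (x - μ) ⬝ᵥ S⁻¹ *ᵥ (x - μ)) ^ (-(ν + d) / 2) := by
  simpa using mvtPdf_smul_eq hν one_pos hS μ x

theorem mvtPdf_eq_mul_of_det_eq_of_quad_eq {d₁ d₂ : ℕ} {ν c q : ℝ} (hν : 0 < ν)
    {S : Matrix (Fin (d₁ + d₂)) (Fin (d₁ + d₂)) ℝ} {A : Matrix (Fin d₁) (Fin d₁) ℝ}
    {S' : Matrix (Fin d₂) (Fin d₂) ℝ} (hS : S.PosDef) (hA : A.PosDef) (hS' : S'.PosDef)
    (hdet : S.det = A.det * S'.det) {μ x : Fin (d₁ + d₂) → ℝ} {μ₁ x₁ : Fin d₁ → ℝ}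
    {μ₂ x₂ : Fin d₂ → ℝ} (hc : c = (x₁ - μ₁) ⬝ᵥ A⁻¹ *ᵥ (x₁ - μ₁))
    (hq : q = (x₂ - μ₂) ⬝ᵥ S'⁻¹ *ᵥ (x₂ - μ₂)) (hquad : (x - μ) ⬝ᵥ S⁻¹ *ᵥ (x - μ) = c + q) :
    mvtPdf (d₁ + d₂) ν μ S x =
      mvtPdf d₁ ν μ₁ A x₁ * mvtPdf d₂ (ν + d₁) μ₂ (((ν + c) / (ν + d₁)) • S') x₂ := by
  have hc₀ : 0 ≤ c := by
    simpa only [hc, star_trivial] using hA.inv.posSemidef.dotProduct_mulVec_nonneg (x₁ - μ₁)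
  have hscale : (ν + c) / (ν + d₁) * (ν + d₁) = ν + c := div_mul_cancel₀ _ (by positivity)
  have hcancel : (ν + c) ^ (-(ν + d₁) / 2) * (ν + c) ^ ((ν + d₁) / 2) = 1 := by
    rw [← Real.rpow_add (by positivity), neg_div, neg_add_cancel, Real.rpow_zero]
  rw [mvtPdf_eq hν hS, mvtPdf_eq hν hA, mvtPdf_smul_eq (by positivity) (by positivity) hS',
    hscale, hdet, hquad, ← hc, ← hq, ← mvtNormConst_mul _ _ _ hν hA.det_pos.le, Nat.cast_add,
    ← add_assoc, ← add_assoc]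
  linear_combination -(mvtNormConst d₁ ν A.det * mvtNormConst d₂ (ν + d₁) S'.det *
    ν ^ (ν / 2) * (ν + c + q) ^ (-(ν + d₁ + d₂) / 2)) * hcancel

/-- The conditional law is expressed through the factorization of the joint density into the
marginal density of the first block times the conditional density of the second. -/
theorem mvt_conditional_second_block (d₁ d₂ : ℕ) (ν : ℝ) (hν : 0 < ν)
    (μ : Fin (d₁ + d₂) → ℝ) (S : Matrix (Fin (d₁ + d₂)) (Fin (d₁ + d₂)) ℝ)
    (hS : S.PosDef) (x : Fin (d₁ + d₂) → ℝ)
    (x₁ μ₁ : Fin d₁ → ℝ) (x₂ μ₂ : Fin d₂ → ℝ)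
    (S₁₁ : Matrix (Fin d₁) (Fin d₁) ℝ) (S₁₂ : Matrix (Fin d₁) (Fin d₂) ℝ)
    (S₂₁ : Matrix (Fin d₂) (Fin d₁) ℝ) (S₂₂ : Matrix (Fin d₂) (Fin d₂) ℝ)
    (hx₁ : x₁ = fun i => x (Fin.castAdd d₂ i)) (hx₂ : x₂ = fun j => x (Fin.natAdd d₁ j))
    (hμ₁ : μ₁ = fun i => μ (Fin.castAdd d₂ i)) (hμ₂ : μ₂ = fun j => μ (Fin.natAdd d₁ j))
    (hS₁₁ : S₁₁ = S.submatrix (Fin.castAdd d₂) (Fin.castAdd d₂))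
    (hS₁₂ : S₁₂ = S.submatrix (Fin.castAdd d₂) (Fin.natAdd d₁))
    (hS₂₁ : S₂₁ = S.submatrix (Fin.natAdd d₁) (Fin.castAdd d₂))
    (hS₂₂ : S₂₂ = S.submatrix (Fin.natAdd d₁) (Fin.natAdd d₁))
    (c : ℝ) (hc : c = (x₁ - μ₁) ⬝ᵥ S₁₁⁻¹ *ᵥ (x₁ - μ₁))
    (μ₂' : Fin d₂ → ℝ) (hμ₂' : μ₂' = μ₂ + (S₂₁ * S₁₁⁻¹) *ᵥ (x₁ - μ₁))
    (S₂₂' : Matrix (Fin d₂) (Fin d₂) ℝ) (hS₂₂' : S₂₂' = S₂₂ - S₂₁ * S₁₁⁻¹ * S₁₂) :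
    mvtPdf (d₁ + d₂) ν μ S x =
      mvtPdf d₁ ν μ₁ S₁₁ x₁ *
        mvtPdf d₂ (ν + d₁) μ₂' (((ν + c) / (ν + d₁)) • S₂₂') x₂ := by
  have hS₂₁' : S₂₁ = S₁₂ᴴ := by rw [hS₂₁, hS₁₂, conjTranspose_submatrix, hS.isHermitian.eq]
  rw [hS₂₁'] at hμ₂' hS₂₂'
  have hblocks : S.submatrix finSumFinEquiv finSumFinEquiv = fromBlocks S₁₁ S₁₂ S₁₂ᴴ S₂₂ := by
    rw [submatrix_finSumFinEquiv, ← hS₁₁, ← hS₁₂, ← hS₂₁, ← hS₂₂, hS₂₁']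
  have hP : (fromBlocks S₁₁ S₁₂ S₁₂ᴴ S₂₂).PosDef := hblocks ▸ hS.submatrix finSumFinEquiv.injective
  have hA : S₁₁.PosDef := by simpa using hP.toBlocks₁₁
  have hSc : S₂₂'.PosDef := hS₂₂' ▸ hP.schur_complement
  have hdet : S.det = S₁₁.det * S₂₂'.det := by
    rw [← det_submatrix_equiv_self finSumFinEquiv, hblocks,
      det_fromBlocks_of_isUnit₁₁ _ hA.isUnit, hS₂₂']
  have hquad : (x - μ) ⬝ᵥ S⁻¹ *ᵥ (x - μ) = c + (x₂ - μ₂') ⬝ᵥ S₂₂'⁻¹ *ᵥ (x₂ - μ₂') := by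
    have hsplit : (x - μ) ∘ finSumFinEquiv = (x₁ - μ₁) ⊕ᵥ (x₂ - μ₂) := by
      rw [comp_finSumFinEquiv, hx₁, hx₂, hμ₁, hμ₂]
      rfl
    rw [← comp_equiv_dotProduct_inv_submatrix_mulVec S finSumFinEquiv, hblocks, hsplit]
    simpa only [star_trivial, hc, hμ₂', hS₂₂', sub_add_eq_sub_sub] using
      star_dotProduct_inv_fromBlocks_mulVec hA.isHermitian hA.isUnit (hS₂₂' ▸ hSc.isUnit)
        (x₁ - μ₁) (x₂ - μ₂)
  exact mvtPdf_eq_mul_of_det_eq_of_quad_eq hν hS hA hSc hdet hc rfl hquad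

end
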